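/- Let G be a temporal graph, k ≥ 1 an integer, and [ts,te] a window with ts < te and C_[ts,te] nonempty. (a) If no edge of C_[ts,te] has timestamp ts, then C_[ts+1,te] = C_[ts,te]. (b) If no edge of C_[ts,te] has timestamp te, then C_[ts,te-1] = C_[ts,te]. -/

import Mathlib

variable {V : Type*} [Fintype V]

/-- A vertex set `S` is `k`-dense in `G` if every vertex of `S` has
at least `k` neighbors of `G` lying in `S`. -/
def KDense (G : SimpleGraph V) (k : ℕ) (S : Set V) : Prop :=
  ∀ v ∈ S, k ≤ (S ∩ G.neighborSet v).ncard

/-- The `k`-core of `G`: the union of all `k`-dense vertex sets. -/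
def kCore (G : SimpleGraph V) (k : ℕ) : Set V :=
  ⋃₀ {S | KDense G k S}

/-- A temporal graph on a vertex set `V`: a finite set of temporal edges
`(u, v, t)` with `u ≠ v` and integer timestamp `t`. -/
structure TemporalGraph (V : Type*) where
  E : Finset (V × V × ℤ)
  ne : ∀ e ∈ E, e.1 ≠ e.2.1

/-- The projected (snapshot) graph of `G` over the time window `[ts, te]`. -/
def TemporalGraph.proj (G : TemporalGraph V) (ts te : ℤ) : SimpleGraph V where
  Adj u v := ∃ t, ts ≤ t ∧ t ≤ te ∧ ((u, v, t) ∈ G.E ∨ (v, u, t) ∈ G.E)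
  symm := by
    constructor
    rintro u v ⟨t, h1, h2, h3⟩
    exact ⟨t, h1, h2, h3.symm⟩
  loopless := by
    constructor
    rintro u ⟨t, h1, h2, h3⟩
    rcases h3 with h | h <;> exact G.ne _ h rfl

/-- The temporal `k`-core of the window `[ts, te]`: all temporal edges with
timestamp in `[ts, te]` whose both endpoints lie in the `k`-core of the
projected graph `G_[ts,te]`. -/
def TemporalGraph.tCore (G : TemporalGraph V) (k : ℕ) (ts te : ℤ) :
    Set (V × V × ℤ) :=
  {e | e ∈ G.E ∧ ts ≤ e.2.2 ∧ e.2.2 ≤ te ∧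
    e.1 ∈ kCore (G.proj ts te) k ∧ e.2.1 ∈ kCore (G.proj ts te) k}

/-! Every edge of `G_[ts,te]` between two vertices of its `k`-core is witnessed by an edge of
the temporal `k`-core. So if all edges of `C_[ts,te]` have timestamps in a subwindow, the `k`-core
of `G_[ts,te]` stays `k`-dense in the projection onto the subwindow; with monotonicity of the
`k`-core the two cores, hence the two temporal cores, coincide. -/

lemma kDense_kCore (G : SimpleGraph V) (k : ℕ) : KDense G k (kCore G k) := by
  rintro v ⟨S, hS, hvS⟩
  calc k ≤ (S ∩ G.neighborSet v).ncard := hS v hvS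
    _ ≤ (kCore G k ∩ G.neighborSet v).ncard :=
      Set.ncard_le_ncard (Set.inter_subset_inter_left _ (Set.subset_sUnion_of_mem hS))

lemma kCore_subset_kCore_of_adj {G H : SimpleGraph V} {k : ℕ}
    (h : ∀ u ∈ kCore G k, ∀ v ∈ kCore G k, G.Adj u v → H.Adj u v) :
    kCore G k ⊆ kCore H k := by
  refine Set.subset_sUnion_of_mem fun u hu => (kDense_kCore G k u hu).trans ?_
  refine Set.ncard_le_ncard ?_
  rintro v ⟨hv, hadj⟩
  exact ⟨hv, h u hu v hv hadj⟩

lemma kCore_mono {G H : SimpleGraph V} (hGH : G ≤ H) (k : ℕ) : kCore G k ⊆ kCore H k :=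
  kCore_subset_kCore_of_adj fun _ _ _ _ hadj => hGH hadj

namespace TemporalGraph

lemma kCore_proj_eq_of_tCore_subwindow (G : TemporalGraph V) (k : ℕ) {ts ts' te te' : ℤ}
    (hs : ts ≤ ts') (he : te' ≤ te)
    (h : ∀ e ∈ G.tCore k ts te, ts' ≤ e.2.2 ∧ e.2.2 ≤ te') :
    kCore (G.proj ts' te') k = kCore (G.proj ts te) k := by
  have hproj : G.proj ts' te' ≤ G.proj ts te :=
    fun _ _ ⟨t, hts, hte, hmem⟩ => ⟨t, hs.trans hts, hte.trans he, hmem⟩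
  refine (kCore_mono hproj k).antisymm (kCore_subset_kCore_of_adj ?_)
  rintro u hu v hv ⟨t, hts, hte, huv | hvu⟩
  · obtain ⟨hts', hte'⟩ := h (u, v, t) ⟨huv, hts, hte, hu, hv⟩
    exact ⟨t, hts', hte', .inl huv⟩
  · obtain ⟨hts', hte'⟩ := h (v, u, t) ⟨hvu, hts, hte, hv, hu⟩
    exact ⟨t, hts', hte', .inr hvu⟩

lemma tCore_eq_of_subwindow (G : TemporalGraph V) (k : ℕ) {ts ts' te te' : ℤ}
    (hs : ts ≤ ts') (he : te' ≤ te)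
    (h : ∀ e ∈ G.tCore k ts te, ts' ≤ e.2.2 ∧ e.2.2 ≤ te') :
    G.tCore k ts' te' = G.tCore k ts te := by
  have hcore := G.kCore_proj_eq_of_tCore_subwindow k hs he h
  ext e
  constructor
  · rintro ⟨hE, hts, hte, hu, hv⟩
    rw [hcore] at hu hv
    exact ⟨hE, hs.trans hts, hte.trans he, hu, hv⟩
  · intro he'
    obtain ⟨hts', hte'⟩ := h e he'
    obtain ⟨hE, -, -, hu, hv⟩ := he'
    rw [← hcore] at hu hv
    exact ⟨hE, hts', hte', hu, hv⟩

end TemporalGraph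

theorem tCore_shrink_of_no_boundary_edge_general (G : TemporalGraph V) (k : ℕ)
    (ts te : ℤ) :
    ((∀ e ∈ G.tCore k ts te, e.2.2 ≠ ts) →
      G.tCore k (ts + 1) te = G.tCore k ts te) ∧
    ((∀ e ∈ G.tCore k ts te, e.2.2 ≠ te) →
      G.tCore k ts (te - 1) = G.tCore k ts te) := by
  constructor
  · intro h
    refine G.tCore_eq_of_subwindow k (Int.le_add_one le_rfl) le_rfl fun e he => ⟨?_, he.2.2.1⟩
    exact Int.add_one_le_of_lt (he.2.1.lt_of_ne (h e he).symm)
  · intro h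
    refine G.tCore_eq_of_subwindow k le_rfl (sub_le_self te zero_le_one) fun e he => ⟨he.2.1, ?_⟩
    exact Int.le_sub_one_of_lt (he.2.2.1.lt_of_ne (h e he))

theorem tCore_shrink_of_no_boundary_edge (G : TemporalGraph V) (k : ℕ)
    (hk : 1 ≤ k) (ts te : ℤ) (hlt : ts < te)
    (hne : (G.tCore k ts te).Nonempty) :
    ((∀ e ∈ G.tCore k ts te, e.2.2 ≠ ts) →
      G.tCore k (ts + 1) te = G.tCore k ts te) ∧
    ((∀ e ∈ G.tCore k ts te, e.2.2 ≠ te) →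
      G.tCore k ts (te - 1) = G.tCore k ts te) :=
  tCore_shrink_of_no_boundary_edge_general G k ts te
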